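/- The function t ↦ log Φ(t) satisfies log Φ(t) / (t²/2) → -1 as t → -∞; equivalently, |log Φ(t)| = O(t²) as t → -∞. -/

import Mathlib

noncomputable def phi (t : ℝ) : ℝ := (Real.sqrt (2 * Real.pi))⁻¹ * Real.exp (-t ^ 2 / 2)

noncomputable def Phi (t : ℝ) : ℝ := ∫ u in Set.Iic t, phi u

noncomputable def millsR (t : ℝ) : ℝ := phi t / Phi t

open Filter

/-!
For `t ≤ -1` the tail `Φ(t)` is squeezed between `φ(t - 1)` (the mass of `[t - 1, t]`, where `φ`
is increasing) and `φ(t)` (on `u ≤ t ≤ -1` one has `φ(u) ≤ φ(t) e^{u - t}`). Since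
`log φ(s) = -log √(2π) - s²/2`, both bounds divided by `t²/2` tend to `-1`.
-/

open MeasureTheory Set Real Topology

lemma phi_pos (t : ℝ) : 0 < phi t := by
  unfold phi
  positivity

lemma integrable_phi : Integrable phi := by
  refine ((integrable_exp_neg_mul_sq (by norm_num : (0 : ℝ) < 1 / 2)).const_mul
    (√(2 * π))⁻¹).congr (ae_of_all _ fun t => ?_)
  unfold phi
  ring_nf

lemma log_phi (s : ℝ) : log (phi s) = -log √(2 * π) - s ^ 2 / 2 := by
  unfold phi
  rw [log_mul (by positivity) (exp_ne_zero _), log_inv, log_exp]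
  ring

lemma phi_monotoneOn : MonotoneOn phi (Iic 0) := by
  intro u _ t ht hut
  unfold phi
  gcongr _ * exp ?_
  nlinarith [mem_Iic.1 ht]

lemma phi_sub_one_le_Phi {t : ℝ} (ht : t ≤ 0) : phi (t - 1) ≤ Phi t := by
  have h_const : ∫ _ in Ioc (t - 1) t, phi (t - 1) = phi (t - 1) := by
    simp [Real.volume_real_Ioc]
  calc phi (t - 1) = ∫ _ in Ioc (t - 1) t, phi (t - 1) := h_const.symm
    _ ≤ ∫ u in Ioc (t - 1) t, phi u :=
      setIntegral_mono_on (integrableOn_const (by simp)) integrable_phi.integrableOn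
        measurableSet_Ioc fun u hu =>
          phi_monotoneOn (mem_Iic.2 (by linarith)) (ht.trans' hu.2) hu.1.le
    _ ≤ Phi t := setIntegral_mono_set integrable_phi.integrableOn
      (ae_of_all _ fun u => (phi_pos u).le) Ioc_subset_Iic_self.eventuallyLE

lemma phi_le_mul_exp {u t : ℝ} (hut : u ≤ t) (ht : t ≤ -1) :
    phi u ≤ phi t * exp (-t) * exp u := by
  unfold phi
  rw [mul_assoc, mul_assoc, ← exp_add, ← exp_add]
  gcongr
  nlinarith

lemma Phi_le_phi {t : ℝ} (ht : t ≤ -1) : Phi t ≤ phi t :=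
  calc Phi t ≤ ∫ u in Iic t, phi t * exp (-t) * exp u :=
        setIntegral_mono_on integrable_phi.integrableOn ((integrableOn_exp_Iic t).const_mul _)
          measurableSet_Iic fun u hu => phi_le_mul_exp hu ht
    _ = phi t := by
      rw [integral_const_mul, integral_exp_Iic, mul_assoc, ← exp_add, neg_add_cancel, exp_zero,
        mul_one]

lemma log_Phi_mem_Icc {t : ℝ} (ht : t ≤ -1) :
    log (Phi t) ∈ Icc (log (phi (t - 1))) (log (phi t)) := by
  have h_lower := phi_sub_one_le_Phi (by linarith : t ≤ 0)
  exact ⟨log_le_log (phi_pos _) h_lower,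
    log_le_log ((phi_pos _).trans_le h_lower) (Phi_le_phi ht)⟩

lemma tendsto_log_phi_sub_div_sq (a : ℝ) :
    Tendsto (fun t => log (phi (t - a)) / (t ^ 2 / 2)) atBot (𝓝 (-1)) := by
  have h_inv := tendsto_inv_atBot_zero (𝕜 := ℝ)
  have h_lim : Tendsto (fun t : ℝ => -2 * log √(2 * π) * t⁻¹ ^ 2 - (1 - a * t⁻¹) ^ 2)
      atBot (𝓝 (-1)) := by
    convert ((h_inv.pow 2).const_mul (-2 * log √(2 * π))).sub
      (((tendsto_const_nhds (x := (1 : ℝ))).sub (h_inv.const_mul a)).pow 2) using 2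
    norm_num
  refine h_lim.congr' ?_
  filter_upwards [eventually_ne_atBot 0] with t ht
  rw [log_phi]
  field_simp

/-- `log Φ(t) / (t²/2) → -1` as `t → -∞`; in particular `|log Φ(t)| = O(t²)` at `-∞`. -/
theorem logPhi_asymptotics_atBot :
    Tendsto (fun t : ℝ => Real.log (Phi t) / (t ^ 2 / 2)) atBot (nhds (-1)) ∧
      (fun t : ℝ => |Real.log (Phi t)|) =O[atBot] (fun t : ℝ => t ^ 2) := by
  have h_lim : Tendsto (fun t : ℝ => log (Phi t) / (t ^ 2 / 2)) atBot (𝓝 (-1)) := by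
    have h_bounds := (eventually_le_atBot (-1 : ℝ)).mono fun t ht => log_Phi_mem_Icc ht
    refine tendsto_of_tendsto_of_tendsto_of_le_of_le' (tendsto_log_phi_sub_div_sq 1)
      (by simpa using tendsto_log_phi_sub_div_sq 0) ?_ ?_
    · exact h_bounds.mono fun t h => div_le_div_of_nonneg_right h.1 (by positivity)
    · exact h_bounds.mono fun t h => div_le_div_of_nonneg_right h.2 (by positivity)
  refine ⟨h_lim, Asymptotics.isBigO_abs_left.2 ?_⟩
  have h_half : (fun t : ℝ => log (Phi t)) =O[atBot] fun t => t ^ 2 / 2 := by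
    refine Asymptotics.isBigO_of_div_tendsto_nhds ?_ (-1) h_lim
    filter_upwards [eventually_ne_atBot 0] with t ht h
    exact absurd h (by positivity)
  refine h_half.trans ?_
  simpa only [div_eq_inv_mul] using Asymptotics.isBigO_const_mul_self 2⁻¹ (fun t : ℝ => t ^ 2) atBot
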